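/- arXiv:math/0701426 — 4 statements merged into one kernel-verified Lean document; each statement's English description precedes it below -/
import Mathlib

section
/- For every real number a with |a| < 1, ∫₀^{2π} log|cos φ − a| dφ = −2π log 2. -/
/-!
Writing `a = cos θ` and `w = e^{iθ}`, one has
`(z - w) (z - w⁻¹) = 2 z (cos φ - a)` for `z = e^{iφ}`, so
`log |cos φ - a| = log |z - w| + log |z - w⁻¹| - log 2`
away from the two points `z = w, w⁻¹`. The circle average of `log |z - c|` over the unit circle
is `log⁺ |c|`, which vanishes for `|c| = 1`; hence the average of `log |cos φ - a|` is `-log 2`.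
-/

open MeasureTheory Real Filter Metric

lemma sub_mul_sub_inv_eq {z w : ℂ} (hz : z ≠ 0) (hw : w ≠ 0) :
    (z - w) * (z - w⁻¹) = 2 * z * ((z + z⁻¹) / 2 - (w + w⁻¹) / 2) := by
  field_simp
  ring

theorem circleAverage_log_norm_joukowski_sub {w : ℂ} (hw : w ≠ 0) :
    circleAverage (fun z ↦ log ‖(z + z⁻¹) / 2 - (w + w⁻¹) / 2‖) 0 1
      = log⁺ ‖w‖ + log⁺ ‖w⁻¹‖ - log 2 := by
  calc circleAverage (fun z ↦ log ‖(z + z⁻¹) / 2 - (w + w⁻¹) / 2‖) 0 1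
  _ = circleAverage ((log ‖· - w‖) + (log ‖· - w⁻¹‖) - fun _ ↦ log 2) 0 1 := by
    refine circleAverage_congr_codiscreteWithin ?_ one_ne_zero
    filter_upwards [self_mem_codiscreteWithin (sphere (0 : ℂ) |1|),
      compl_finite_mem_codiscreteWithin (Set.toFinite {w, w⁻¹})] with z hz hzw
    simp only [abs_one, mem_sphere_iff_norm, sub_zero] at hz
    simp only [Set.mem_compl_iff, Set.mem_insert_iff, Set.mem_singleton_iff, not_or] at hzw
    have hz0 : z ≠ 0 := norm_ne_zero_iff.mp (hz ▸ one_ne_zero)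
    have h₁ : ‖z - w‖ ≠ 0 := norm_ne_zero_iff.mpr (sub_ne_zero.mpr hzw.1)
    have h₂ : ‖z - w⁻¹‖ ≠ 0 := norm_ne_zero_iff.mpr (sub_ne_zero.mpr hzw.2)
    have key := congrArg norm (sub_mul_sub_inv_eq hz0 hw)
    rw [norm_mul, norm_mul, norm_mul, hz, Complex.norm_ofNat, mul_one] at key
    simp only [Pi.add_apply, Pi.sub_apply]
    rw [← log_mul h₁ h₂, key,
      log_mul two_ne_zero (right_ne_zero_of_mul (key ▸ mul_ne_zero h₁ h₂))]
    ring
  _ = log⁺ ‖w‖ + log⁺ ‖w⁻¹‖ - log 2 := by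
    rw [circleAverage_sub (by fun_prop) (circleIntegrable_const _ _ _),
      circleAverage_add (by fun_prop) (by fun_prop), circleAverage_log_norm_sub_const_eq_posLog,
      circleAverage_log_norm_sub_const_eq_posLog, circleAverage_const]

lemma joukowski_circleMap (φ : ℝ) :
    (circleMap 0 1 φ + (circleMap 0 1 φ)⁻¹) / 2 = Real.cos φ := by
  rw [circleMap_zero, Complex.ofReal_one, one_mul, ← Complex.exp_neg, Complex.ofReal_cos,
    Complex.cos]
  ring_nf

theorem integral_log_abs_cos_sub_eq {a : ℝ} {w : ℂ} (hw : w ≠ 0) (hwa : (w + w⁻¹) / 2 = a) :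
    ∫ φ in (0 : ℝ)..(2 * π), log |cos φ - a| = 2 * π * (log⁺ ‖w‖ + log⁺ ‖w⁻¹‖ - log 2) := by
  have h := circleAverage_log_norm_joukowski_sub hw
  simp only [circleAverage_def, hwa, joukowski_circleMap, ← Complex.ofReal_sub, Complex.norm_real,
    Real.norm_eq_abs, smul_eq_mul] at h
  rw [← h]
  field_simp

/-- For every real number `a` with `|a| < 1`,
`∫₀^{2π} log |cos φ − a| dφ = −2π log 2`. -/
theorem integral_log_abs_cos_sub (a : ℝ) (ha : |a| < 1) :
    ∫ φ in (0 : ℝ)..(2 * π), Real.log |Real.cos φ - a| = -(2 * π * Real.log 2) := by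
  obtain ⟨ha₁, ha₂⟩ := abs_lt.mp ha
  set w := circleMap 0 1 (arccos a)
  have hw : ‖w‖ = 1 := by simp [w]
  rw [integral_log_abs_cos_sub_eq (w := w) (norm_ne_zero_iff.mp (by simp [hw]))
    (by rw [joukowski_circleMap, cos_arccos ha₁.le ha₂.le]),
    norm_inv, hw, inv_one, posLog_one]
  ring
end

section
/- Let h : [0, ∞) → ℝ be continuously differentiable. Then for every t > 0, ∂_t ∫₀^t ( r h(r) / √(t² − r²) ) dr = (1/t) ∫₀^t ( r · (d/dr)( r h(r) ) / √(t² − r²) ) dr. -/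
/-!
With `g r = r h(r)`, the substitution `r = τ s` turns the left-hand integral into
`∫₀¹ g(τ s) w(s) ds` with the fixed integrable weight `w(s) = 1/√(1 - s²)`. Since `g'` is
bounded on `[0, 2t]`, differentiation under the integral sign gives `∫₀¹ s g'(t s) w(s) ds`,
and substituting back yields `(1/t) ∫₀ᵗ r g'(r)/√(t² - r²) dr`.
-/

open MeasureTheory Real Set Filter Topology

lemma integrableOn_one_div_sqrt_one_sub_sq :
    IntegrableOn (fun s : ℝ => 1 / √(1 - s ^ 2)) (Ioo 0 1) := by
  have hderiv : ∀ x ∈ Ioo (0 : ℝ) 1, HasDerivAt arcsin (1 / √(1 - x ^ 2)) x :=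
    fun x hx => hasDerivAt_arcsin (by linarith [hx.1]) hx.2.ne
  exact (intervalIntegral.integrableOn_deriv_of_nonneg continuous_arcsin.continuousOn hderiv
    fun x _ => by positivity).mono_set Ioo_subset_Ioc_self

lemma setIntegral_Ioo_div_sqrt_sq_sub_sq {t : ℝ} (ht : 0 < t) (f : ℝ → ℝ) :
    ∫ r in Ioo 0 t, f r / √(t ^ 2 - r ^ 2) = ∫ s in Ioo 0 1, f (t * s) / √(1 - s ^ 2) := by
  have hsqrt (s : ℝ) : √(t ^ 2 - (t * s) ^ 2) = t * √(1 - s ^ 2) := by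
    rw [show t ^ 2 - (t * s) ^ 2 = t ^ 2 * (1 - s ^ 2) by ring, sqrt_mul (sq_nonneg t),
      sqrt_sq ht.le]
  have hscale := intervalIntegral.integral_comp_mul_left (fun r => f r / √(t ^ 2 - r ^ 2))
    ht.ne' (a := 0) (b := 1)
  simp only [mul_zero, mul_one, hsqrt, div_mul_eq_div_div_swap, intervalIntegral.integral_div,
    smul_eq_mul, div_eq_iff ht.ne'] at hscale
  rw [← integral_Ioc_eq_integral_Ioo, ← integral_Ioc_eq_integral_Ioo,
    ← intervalIntegral.integral_of_le ht.le, ← intervalIntegral.integral_of_le zero_le_one,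
    hscale]
  field_simp

lemma integrableOn_comp_mul_mul {φ w : ℝ → ℝ} (hφ : ContinuousOn φ (Ici 0))
    (hw : IntegrableOn w (Ioo 0 1)) {τ : ℝ} (hτ : 0 ≤ τ) :
    IntegrableOn (fun s => φ (τ * s) * w s) (Ioo 0 1) := by
  have hmaps : MapsTo (τ * ·) (Icc 0 1) (Ici 0) := fun s hs => mul_nonneg hτ hs.1
  exact (((integrableOn_Icc_iff_integrableOn_Ioo).mpr hw).continuousOn_mul
    (hφ.comp (by fun_prop) hmaps) isCompact_Icc).mono_set Ioo_subset_Icc_self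

lemma hasDerivAt_setIntegral_comp_mul {g w : ℝ → ℝ} (hg : ContDiffOn ℝ 1 g (Ici 0))
    (hw : IntegrableOn w (Ioo 0 1)) {t : ℝ} (ht : 0 < t) :
    HasDerivAt (fun τ => ∫ s in Ioo 0 1, g (τ * s) * w s)
      (∫ s in Ioo 0 1, s * derivWithin g (Ici 0) (t * s) * w s) t := by
  set g' := derivWithin g (Ici 0)
  have hg'_cont : ContinuousOn g' (Ici 0) :=
    hg.continuousOn_derivWithin (uniqueDiffOn_Ici 0) le_rfl
  have hg_deriv {x : ℝ} (hx : 0 < x) : HasDerivAt g (g' x) x :=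
    (hg.differentiableOn one_ne_zero x hx.le).hasDerivWithinAt.hasDerivAt (Ici_mem_nhds hx)
  obtain ⟨M, hM⟩ := isCompact_Icc.exists_bound_of_continuousOn
    (hg'_cont.mono (Icc_subset_Ici_self : Icc (0 : ℝ) (2 * t) ⊆ Ici 0))
  have hball {τ : ℝ} (hτ : τ ∈ Metric.ball t (t / 2)) : 0 < τ ∧ τ < 2 * t := by
    rw [Metric.mem_ball, dist_eq, abs_lt] at hτ
    constructor <;> linarith [hτ.1, hτ.2]
  refine (hasDerivAt_integral_of_dominated_loc_of_deriv_le (bound := fun s => M * ‖w s‖)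
    (F := fun τ s => g (τ * s) * w s) (F' := fun τ s => s * g' (τ * s) * w s)
    (Metric.ball_mem_nhds t (half_pos ht)) ?_ (integrableOn_comp_mul_mul hg.continuousOn hw ht.le)
    ?_ ?_ (hw.norm.const_mul M) ?_).2
  · filter_upwards [eventually_gt_nhds ht] with τ hτ
    exact (integrableOn_comp_mul_mul hg.continuousOn hw hτ.le).aestronglyMeasurable
  · have hmaps : MapsTo (t * ·) (Ioo 0 1) (Ici 0) := fun s hs => (mul_pos ht hs.1).le
    exact (continuous_id.aestronglyMeasurable.mul ((hg'_cont.comp (by fun_prop) hmaps)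
      |>.aestronglyMeasurable measurableSet_Ioo)).mul hw.aestronglyMeasurable
  · filter_upwards [ae_restrict_mem measurableSet_Ioo] with s hs τ hτ
    obtain ⟨hτ0, hτ2t⟩ := hball hτ
    have hτs : τ * s ∈ Icc 0 (2 * t) := ⟨(mul_pos hτ0 hs.1).le, by nlinarith [hs.2]⟩
    calc ‖s * g' (τ * s) * w s‖ = s * ‖g' (τ * s)‖ * ‖w s‖ := by
          rw [norm_mul, norm_mul, norm_of_nonneg hs.1.le]
      _ ≤ 1 * M * ‖w s‖ := by gcongr; exacts [hs.2.le, hM _ hτs]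
      _ = M * ‖w s‖ := by rw [one_mul]
  · filter_upwards [ae_restrict_mem measurableSet_Ioo] with s hs τ hτ
    have hτs : 0 < τ * s := mul_pos (hball hτ).1 hs.1
    exact (((hg_deriv hτs).comp τ (hasDerivAt_mul_const s)).mul_const (w s)).congr_deriv
      (by ring)

/-- Proposition 4 (differentiation of an Abel-type fractional integral): for `h`
continuously differentiable on `[0,∞)` and `t > 0`,
`∂_t ∫₀^t r h(r)/√(t²−r²) dr = (1/t) ∫₀^t r (d/dr)(r h(r))/√(t²−r²) dr`. -/
theorem deriv_abel_integral (h : ℝ → ℝ) (hh : ContDiffOn ℝ 1 h (Set.Ici 0))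
    (t : ℝ) (ht : 0 < t) :
    deriv (fun τ => ∫ r in Set.Ioo (0 : ℝ) τ, r * h r / Real.sqrt (τ ^ 2 - r ^ 2)) t
      = (1 / t) * ∫ r in Set.Ioo (0 : ℝ) t,
          r * derivWithin (fun s => s * h s) (Set.Ici 0) r / Real.sqrt (t ^ 2 - r ^ 2) := by
  set g : ℝ → ℝ := fun s => s * h s
  have hg : ContDiffOn ℝ 1 g (Ici 0) := contDiffOn_id.mul hh
  have hderiv := hasDerivAt_setIntegral_comp_mul hg integrableOn_one_div_sqrt_one_sub_sq ht
  simp only [mul_one_div] at hderiv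
  have hrescale : (fun τ => ∫ r in Ioo 0 τ, g r / √(τ ^ 2 - r ^ 2))
      =ᶠ[𝓝 t] fun τ => ∫ s in Ioo 0 1, g (τ * s) / √(1 - s ^ 2) := by
    filter_upwards [eventually_gt_nhds ht] with τ hτ
    exact setIntegral_Ioo_div_sqrt_sq_sub_sq hτ g
  rw [hrescale.deriv_eq, hderiv.deriv, setIntegral_Ioo_div_sqrt_sq_sub_sq ht,
    ← integral_const_mul]
  refine setIntegral_congr_fun measurableSet_Ioo fun s _ => ?_
  field_simp
end

section
/- Let m be a natural number, let D_r denote the operator (D_r u)(r) = u′(r)/(2r), and let q : (0, ∞) → ℝ be smooth. Then for every r > 0, ( D_r^m ( r ↦ r^{2m+1} q′(r) ) )(r) = r · d/dr [ ( D_r^m ( r ↦ r^{2m} q(r) ) )(r) ]. -/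
/-!
Write `E = r ∂_r` for the Euler operator. A direct computation gives the commutation relation
`D_r ∘ E = (E + 2) ∘ D_r`, hence `D_r^m ∘ E = (E + 2m) ∘ D_r^m` on smooth functions. Since
`r^{2m+1} q′ = E (r^{2m} q) - 2m r^{2m} q`, linearity of `D_r^m` makes the two `2m`-terms cancel.
-/

/-- The operator `(D_r u)(r) = u′(r)/(2r)`. -/
noncomputable def Dr (u : ℝ → ℝ) : ℝ → ℝ := fun r => deriv u r / (2 * r)

open Set
open scoped ContDiff

variable {f g : ℝ → ℝ}

theorem contDiffOn_deriv_Ioi (hf : ContDiffOn ℝ ∞ f (Ioi 0)) :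
    ContDiffOn ℝ ∞ (deriv f) (Ioi 0) :=
  hf.deriv_of_isOpen isOpen_Ioi (by simp)

theorem differentiableAt_of_contDiffOn_Ioi (hf : ContDiffOn ℝ ∞ f (Ioi 0)) {s : ℝ} (hs : 0 < s) :
    DifferentiableAt ℝ f s :=
  (hf.differentiableOn (by simp)).differentiableAt (isOpen_Ioi.mem_nhds hs)

theorem contDiffOn_euler (hf : ContDiffOn ℝ ∞ f (Ioi 0)) :
    ContDiffOn ℝ ∞ (fun s => s * deriv f s) (Ioi 0) :=
  contDiffOn_id.mul (contDiffOn_deriv_Ioi hf)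

theorem Dr_iterate_congr (m : ℕ) (h : EqOn f g (Ioi 0)) :
    EqOn (Dr^[m] f) (Dr^[m] g) (Ioi 0) := by
  induction m generalizing f g with
  | zero => exact h
  | succ m ih =>
    refine ih fun s hs => ?_
    simp only [Dr, (Filter.eventuallyEq_of_mem (isOpen_Ioi.mem_nhds hs) h).deriv_eq]

theorem contDiffOn_Dr (hf : ContDiffOn ℝ ∞ f (Ioi 0)) : ContDiffOn ℝ ∞ (Dr f) (Ioi 0) :=
  (contDiffOn_deriv_Ioi hf).div (contDiffOn_const.mul contDiffOn_id) fun s hs => by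
    simp [(show (0 : ℝ) < s from hs).ne']

theorem Dr_add_const_mul (c : ℝ) (hf : ContDiffOn ℝ ∞ f (Ioi 0))
    (hg : ContDiffOn ℝ ∞ g (Ioi 0)) :
    EqOn (Dr fun s => f s + c * g s) (fun s => Dr f s + c * Dr g s) (Ioi 0) := by
  intro s hs
  have hfs := differentiableAt_of_contDiffOn_Ioi hf hs
  have hgs := differentiableAt_of_contDiffOn_Ioi hg hs
  simp only [Dr, deriv_fun_add hfs (hgs.const_mul c), deriv_const_mul c hgs]
  ring

theorem Dr_iterate_add_const_mul (m : ℕ) (c : ℝ) (hf : ContDiffOn ℝ ∞ f (Ioi 0))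
    (hg : ContDiffOn ℝ ∞ g (Ioi 0)) :
    EqOn (Dr^[m] fun s => f s + c * g s) (fun s => Dr^[m] f s + c * Dr^[m] g s) (Ioi 0) := by
  induction m generalizing f g with
  | zero => exact fun _ _ => rfl
  | succ m ih =>
    simp only [Function.iterate_succ_apply]
    exact (Dr_iterate_congr m (Dr_add_const_mul c hf hg)).trans
      (ih (contDiffOn_Dr hf) (contDiffOn_Dr hg))

theorem Dr_euler (hf : ContDiffOn ℝ ∞ f (Ioi 0)) :
    EqOn (Dr fun s => s * deriv f s) (fun s => s * deriv (Dr f) s + 2 * Dr f s) (Ioi 0) := by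
  intro s hs
  have hs0 : s ≠ 0 := (show (0 : ℝ) < s from hs).ne'
  have hf' := differentiableAt_of_contDiffOn_Ioi (contDiffOn_deriv_Ioi hf) hs
  have hDr : HasDerivAt (Dr f)
      ((deriv (deriv f) s * (2 * s) - deriv f s * 2) / (2 * s) ^ 2) s :=
    (hf'.hasDerivAt.div ((hasDerivAt_id s).const_mul 2) (by simpa using hs0)).congr_deriv
      (by simp)
  have hE : HasDerivAt (fun s => s * deriv f s) (1 * deriv f s + s * deriv (deriv f) s) s :=
    (hasDerivAt_id' s).mul hf'.hasDerivAt
  simp only [Dr, hDr.deriv, hE.deriv]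
  field_simp
  ring

theorem Dr_iterate_euler (m : ℕ) (hf : ContDiffOn ℝ ∞ f (Ioi 0)) :
    EqOn (Dr^[m] fun s => s * deriv f s)
      (fun s => s * deriv (Dr^[m] f) s + 2 * m * Dr^[m] f s) (Ioi 0) := by
  induction m generalizing f with
  | zero => intro s _; simp
  | succ m ih =>
    intro s hs
    have hDrf := contDiffOn_Dr hf
    rw [Function.iterate_succ_apply, Function.iterate_succ_apply,
      Dr_iterate_congr m (Dr_euler hf) hs,
      Dr_iterate_add_const_mul m 2 (contDiffOn_euler hDrf) hDrf hs]
    dsimp only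
    rw [ih hDrf hs]
    push_cast
    ring

/-- The identity `D_r^m (r^{2m+1} q′) = r ∂_r (D_r^m (r^{2m} q))` for `q` smooth
on `(0,∞)` and `r > 0`. -/
theorem Dr_pow_comm (m : ℕ) (q : ℝ → ℝ)
    (hq : ContDiffOn ℝ (⊤ : ℕ∞) q (Set.Ioi 0)) (r : ℝ) (hr : 0 < r) :
    (Dr^[m] (fun s => s ^ (2 * m + 1) * deriv q s)) r
      = r * deriv (Dr^[m] (fun s => s ^ (2 * m) * q s)) r := by
  set f : ℝ → ℝ := fun s => s ^ (2 * m) * q s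
  have hf : ContDiffOn ℝ ∞ f (Ioi 0) := (contDiffOn_id.pow _).mul hq
  have hsplit : EqOn (fun s => s ^ (2 * m + 1) * deriv q s)
      (fun s => s * deriv f s + -(2 * m) * f s) (Ioi 0) := by
    intro s hs
    simp only [f, deriv_fun_mul (differentiableAt_pow _)
      (differentiableAt_of_contDiffOn_Ioi hq hs), deriv_pow_field]
    rcases m with _ | m
    · simp
    · rw [show 2 * (m + 1) - 1 = 2 * m + 1 by omega]
      push_cast
      ring
  rw [Dr_iterate_congr m hsplit hr,
    Dr_iterate_add_const_mul m _ (contDiffOn_euler hf) hf hr]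
  dsimp only
  rw [Dr_iterate_euler m hf hr]
  ring
end

section
/- Let R₀ > 0 and define K(t, r̄) = ∫_t^{2R₀} ( r / √(r² − t²) ) log | r² − r̄² | dr for 0 ≤ t ≤ 2R₀ and 0 ≤ r̄ ≤ 2R₀. Then for 0 < t < 2R₀ and 0 < r̄ < 2R₀ with t ≠ r̄, K(t, r̄) = √(4R₀² − t²) · ( −2 + log |4R₀² − r̄²| ) + Γ(t, r̄), where Γ(t, r̄) = √(r̄² − t²) · log( ( √(4R₀² − t²) + √(r̄² − t²) ) / ( √(4R₀² − t²) − √(r̄² − t²) ) ) if t < r̄, and Γ(t, r̄) = 2 √(t² − r̄²) · arctan( √( (4R₀² − t²) / (t² − r̄²) ) ) if t > r̄. -/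
/-!
The substitution `w = √(r² - t²)` turns `K(t, r̄)` into `∫₀^A log |w² - (r̄² - t²)| dw` with
`A = √(4R₀² - t²)`. For `t < r̄` the integrand splits as `log |w - s| + log |w + s|`,
`s = √(r̄² - t²)`, and both pieces are translates of `∫ log`. For `t > r̄` it is the smooth
function `log (w² + d²)`, `d = √(t² - r̄²)`, with antiderivative
`w log (w² + d²) - 2w + 2d arctan (w / d)`.
-/

open Real MeasureTheory Set Interval

theorem hasDerivAt_sqrt_sq_sub_sq {t r : ℝ} (h : t ^ 2 < r ^ 2) :
    HasDerivAt (fun x : ℝ => √(x ^ 2 - t ^ 2)) (r / √(r ^ 2 - t ^ 2)) r := by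
  have hd := ((hasDerivAt_pow 2 r).sub_const (t ^ 2)).sqrt (by linarith)
  convert hd using 1
  field_simp
  ring

theorem strictMonoOn_sqrt_sq_sub_sq {t : ℝ} (ht : 0 ≤ t) :
    StrictMonoOn (fun x : ℝ => √(x ^ 2 - t ^ 2)) (Ici t) := by
  intro x (hx : t ≤ x) y _ hxy
  exact Real.sqrt_lt_sqrt (by nlinarith) (by nlinarith)

theorem setIntegral_Ioc_comp_sqrt_sq_sub_sq {E : Type*} [NormedAddCommGroup E]
    [NormedSpace ℝ E] {t b : ℝ} (ht : 0 ≤ t) (htb : t ≤ b) (g : ℝ → E) :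
    ∫ r in Ioc t b, (r / √(r ^ 2 - t ^ 2)) • g √(r ^ 2 - t ^ 2)
      = ∫ w in Ioc 0 √(b ^ 2 - t ^ 2), g w := by
  set φ : ℝ → ℝ := fun x => √(x ^ 2 - t ^ 2)
  have hmono : StrictMonoOn φ (Icc t b) :=
    (strictMonoOn_sqrt_sq_sub_sq ht).mono Icc_subset_Ici_self
  have himage : φ '' Ioc t b = Ioc 0 √(b ^ 2 - t ^ 2) := by
    rw [(by fun_prop : Continuous φ).continuousOn.image_Ioc_of_strictMonoOn htb hmono]
    simp [φ]
  rw [← himage, integral_image_eq_integral_abs_deriv_smul measurableSet_Ioc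
    (fun r hr => (hasDerivAt_sqrt_sq_sub_sq (by nlinarith [hr.1])).hasDerivWithinAt)
    (hmono.injOn.mono Ioc_subset_Icc_self)]
  refine setIntegral_congr_fun measurableSet_Ioc fun r hr => ?_
  rw [abs_of_nonneg (div_nonneg (by linarith [hr.1]) (sqrt_nonneg _))]

theorem integral_log_sq_sub_sq (s A : ℝ) :
    ∫ w in (0)..A, log (w ^ 2 - s ^ 2)
      = (A - s) * log (A - s) + (A + s) * log (A + s) - 2 * A := by
  have hsplit : ∀ᵐ w ∂volume, w ∈ Ι 0 A →
      log (w ^ 2 - s ^ 2) = log (w - s) + log (w + s) := by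
    filter_upwards [Measure.ae_ne volume s, Measure.ae_ne volume (-s)] with w h₁ h₂ _
    rw [← log_mul (sub_ne_zero.2 h₁) (by rwa [← sub_neg_eq_add, sub_ne_zero])]
    ring_nf
  have hint_sub : IntervalIntegrable (fun w => log (w - s)) volume 0 A := by
    simpa using (intervalIntegral.intervalIntegrable_log' (a := -s) (b := A - s)).comp_sub_right s
  have hint_add : IntervalIntegrable (fun w => log (w + s)) volume 0 A := by
    simpa using (intervalIntegral.intervalIntegrable_log' (a := s) (b := A + s)).comp_add_right s
  rw [intervalIntegral.integral_congr_ae hsplit, intervalIntegral.integral_add hint_sub hint_add,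
    intervalIntegral.integral_comp_sub_right log, intervalIntegral.integral_comp_add_right log,
    integral_log, integral_log, zero_sub, zero_add, log_neg_eq_log]
  ring

theorem hasDerivAt_log_sq_add_sq_antideriv {d : ℝ} (hd : d ≠ 0) (w : ℝ) :
    HasDerivAt (fun x => x * log (x ^ 2 + d ^ 2) - 2 * x + 2 * d * arctan (x / d))
      (log (w ^ 2 + d ^ 2)) w := by
  have hpos : 0 < w ^ 2 + d ^ 2 := by positivity
  have hlog := ((hasDerivAt_pow 2 w).add_const (d ^ 2)).log hpos.ne'
  have hatan := ((hasDerivAt_id' w).div_const d).arctan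
  refine ((((hasDerivAt_id' w).mul hlog).sub ((hasDerivAt_id' w).const_mul 2)).add
    (hatan.const_mul (2 * d))).congr_deriv ?_
  field_simp
  ring

theorem integral_log_sq_add_sq {d : ℝ} (hd : d ≠ 0) (A : ℝ) :
    ∫ w in (0)..A, log (w ^ 2 + d ^ 2)
      = A * log (A ^ 2 + d ^ 2) - 2 * A + 2 * d * arctan (A / d) := by
  rw [intervalIntegral.integral_eq_sub_of_hasDerivAt
    (fun w _ => hasDerivAt_log_sq_add_sq_antideriv hd w)
    (Continuous.intervalIntegrable (by fun_prop (disch := exact fun w => by positivity)) _ _)]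
  simp

theorem kernel_K_eval_general (R₀ t rb : ℝ)
    (ht : 0 < t) (ht2 : t < 2 * R₀) (hrb : 0 < rb) (hrb2 : rb < 2 * R₀)
    (hne : t ≠ rb) :
    (∫ r in Set.Ioc t (2 * R₀), (r / Real.sqrt (r ^ 2 - t ^ 2)) * Real.log |r ^ 2 - rb ^ 2|)
      = Real.sqrt (4 * R₀ ^ 2 - t ^ 2) * (-2 + Real.log |4 * R₀ ^ 2 - rb ^ 2|) +
        (if t < rb then
          Real.sqrt (rb ^ 2 - t ^ 2) *
            Real.log ((Real.sqrt (4 * R₀ ^ 2 - t ^ 2) + Real.sqrt (rb ^ 2 - t ^ 2)) /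
              (Real.sqrt (4 * R₀ ^ 2 - t ^ 2) - Real.sqrt (rb ^ 2 - t ^ 2)))
        else
          2 * Real.sqrt (t ^ 2 - rb ^ 2) *
            Real.arctan (Real.sqrt ((4 * R₀ ^ 2 - t ^ 2) / (t ^ 2 - rb ^ 2)))) := by
  have hsubst : ∫ r in Ioc t (2 * R₀), (r / √(r ^ 2 - t ^ 2)) * log |r ^ 2 - rb ^ 2|
      = ∫ w in (0)..√(4 * R₀ ^ 2 - t ^ 2), log (w ^ 2 - (rb ^ 2 - t ^ 2)) := by
    rw [intervalIntegral.integral_of_le (sqrt_nonneg _),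
      ← (show (2 * R₀) ^ 2 = 4 * R₀ ^ 2 by ring),
      ← setIntegral_Ioc_comp_sqrt_sq_sub_sq ht.le ht2.le]
    refine setIntegral_congr_fun measurableSet_Ioc fun r hr => ?_
    rw [smul_eq_mul, sq_sqrt (by nlinarith [hr.1]), log_abs]
    ring_nf
  set A := √(4 * R₀ ^ 2 - t ^ 2)
  have hA : A ^ 2 = 4 * R₀ ^ 2 - t ^ 2 := sq_sqrt (by nlinarith)
  rw [hsubst]
  rcases lt_or_gt_of_ne hne with h | h
  · set s := √(rb ^ 2 - t ^ 2)
    have hs : rb ^ 2 - t ^ 2 = s ^ 2 := (sq_sqrt (by nlinarith)).symm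
    have hsA : s < A := sqrt_lt_sqrt (by nlinarith) (by nlinarith)
    have hs0 : 0 ≤ s := sqrt_nonneg _
    have hfactor : 4 * R₀ ^ 2 - rb ^ 2 = (A - s) * (A + s) := by nlinarith
    rw [if_pos h, hs, integral_log_sq_sub_sq, hfactor, log_abs,
      log_mul (by linarith) (by linarith), log_div (by linarith) (by linarith)]
    ring
  · set d := √(t ^ 2 - rb ^ 2)
    have hd : rb ^ 2 - t ^ 2 = -d ^ 2 := by rw [sq_sqrt (by nlinarith)]; ring
    have hd0 : 0 < d := sqrt_pos.2 (by nlinarith)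
    have hAd : 4 * R₀ ^ 2 - rb ^ 2 = A ^ 2 + d ^ 2 := by rw [hA, sq_sqrt (by nlinarith)]; ring
    simp_rw [if_neg h.not_gt, hd, sub_neg_eq_add]
    rw [integral_log_sq_add_sq hd0.ne', sqrt_div' _ (by nlinarith : 0 ≤ t ^ 2 - rb ^ 2), hAd,
      abs_of_pos (by positivity)]
    ring

/-- Explicit evaluation of the kernel `K(t, r̄) = ∫_t^{2R₀} (r/√(r²−t²)) log |r²−r̄²| dr`
arising in the finite-time inversion of the two-dimensional wave equation:
for `0 < t < 2R₀`, `0 < r̄ < 2R₀`, `t ≠ r̄`,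
`K(t,r̄) = √(4R₀²−t²)(−2 + log |4R₀²−r̄²|) + Γ(t,r̄)` with `Γ` as in the paper. -/
theorem kernel_K_eval (R₀ t rb : ℝ) (hR₀ : 0 < R₀)
    (ht : 0 < t) (ht2 : t < 2 * R₀) (hrb : 0 < rb) (hrb2 : rb < 2 * R₀)
    (hne : t ≠ rb) :
    (∫ r in Set.Ioc t (2 * R₀), (r / Real.sqrt (r ^ 2 - t ^ 2)) * Real.log |r ^ 2 - rb ^ 2|)
      = Real.sqrt (4 * R₀ ^ 2 - t ^ 2) * (-2 + Real.log |4 * R₀ ^ 2 - rb ^ 2|) +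
        (if t < rb then
          Real.sqrt (rb ^ 2 - t ^ 2) *
            Real.log ((Real.sqrt (4 * R₀ ^ 2 - t ^ 2) + Real.sqrt (rb ^ 2 - t ^ 2)) /
              (Real.sqrt (4 * R₀ ^ 2 - t ^ 2) - Real.sqrt (rb ^ 2 - t ^ 2)))
        else
          2 * Real.sqrt (t ^ 2 - rb ^ 2) *
            Real.arctan (Real.sqrt ((4 * R₀ ^ 2 - t ^ 2) / (t ^ 2 - rb ^ 2)))) :=
  kernel_K_eval_general R₀ t rb ht ht2 hrb hrb2 hne
end
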